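/- Unconditional L² stability of the overlapping scheme with coarse-flux/fine-pressure matching: augment the one-dimensional composite finite volume scheme with additional unknowns p_{I+1}^{n,k} (k = 1,…,𝒦) and p_I^{n} (n = 1,…,N₂), interface fluxes u_{I+1/2}^{n,k} = (p_{I+1}^{n,k} − p_I^{n,k})/(x_{I+1} − x_I) and u_{I+1/2}^{n} = (p_{I+1}^{n} − p_I^{n})/(x_{I+1} − x_I), and interface conditions, for every n: δt₂ u_{I+1/2}^{n} = Σ_{k=1}^{𝒦} δt₁ u_{I+1/2}^{n,k} and p_{I+1}^{n,k} = p_{I+1}^{n} for all k. If all sources vanish (f_j^{n,k} = 0 and f_j^{n} = 0), then every solution satisfies Σ_{j ≤ I} h_j (p_j^{N₂,𝒦})² + Σ_{j > I} h_j (p_j^{N₂})² ≤ Σ_{j=1}^{J} h_j (p_j^{0})², with no restriction on the sizes of δt₁, δt₂ or the cell widths. -/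

import Mathlib

open Finset

/-- Cell center `x_j = (x_{j-1/2} + x_{j+1/2})/2`, where `xh j` denotes `x_{j+1/2}`
(so `xh 0 = x_{1/2}`, …, `xh J = x_{J+1/2}`). -/
noncomputable def xc (xh : ℕ → ℝ) (j : ℕ) : ℝ := (xh (j - 1) + xh j) / 2

/-- Cell width `h_j = x_{j+1/2} − x_{j−1/2}`. -/
noncomputable def hw (xh : ℕ → ℝ) (j : ℕ) : ℝ := xh j - xh (j - 1)

/-- The previous fine-time value `p_j^{n,k−1}`, with the conventions
`p_j^{n,0} = p_j^{n−1,𝒦}` and `p_j^{1,0} = p_j^0`. -/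
def prevF (K : ℕ) (p0 : ℕ → ℝ) (p1 : ℕ → ℕ → ℕ → ℝ) (n k j : ℕ) : ℝ :=
  if k = 1 then (if n = 1 then p0 j else p1 (n - 1) K j) else p1 n (k - 1) j

/-- The previous coarse-time value `p_j^{n−1}`, with the convention `p_j^0 = p_j^0`. -/
def prevC (p0 : ℕ → ℝ) (p2 : ℕ → ℕ → ℝ) (n j : ℕ) : ℝ :=
  if n = 1 then p0 j else p2 (n - 1) j

/-- Fine fluxes `u_{j+1/2}^{n,k}` for face indices `j = 0,…,I` in the overlapping
scheme: `u_{1/2}^{n,k} = p_1^{n,k}/(x_1 − x_{1/2})`,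
`u_{j+1/2}^{n,k} = (p_{j+1}^{n,k} − p_j^{n,k})/(x_{j+1} − x_j)` for `1 ≤ j < I`, and the
interface flux `u_{I+1/2}^{n,k} = (p_{I+1}^{n,k} − p_I^{n,k})/(x_{I+1} − x_I)`, where
`r1 n k` denotes the extra unknown `p_{I+1}^{n,k}`. -/
noncomputable def uF (I : ℕ) (xh : ℕ → ℝ) (p1 : ℕ → ℕ → ℕ → ℝ) (r1 : ℕ → ℕ → ℝ)
    (n k j : ℕ) : ℝ :=
  if j = 0 then p1 n k 1 / (xc xh 1 - xh 0)
  else if j < I then (p1 n k (j + 1) - p1 n k j) / (xc xh (j + 1) - xc xh j)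
  else (r1 n k - p1 n k I) / (xc xh (I + 1) - xc xh I)

/-- Coarse fluxes `u_{j+1/2}^{n}` for face indices `j = I,…,J` in the overlapping
scheme: the interface flux `u_{I+1/2}^{n} = (p_{I+1}^{n} − p_I^{n})/(x_{I+1} − x_I)`
(where `r2 n` denotes the extra unknown `p_I^{n}`),
`u_{j+1/2}^{n} = (p_{j+1}^{n} − p_j^{n})/(x_{j+1} − x_j)` for `I < j < J`, and
`u_{J+1/2}^{n} = −p_J^{n}/(x_{J+1/2} − x_J)`. -/
noncomputable def uC (I J : ℕ) (xh : ℕ → ℝ) (p2 : ℕ → ℕ → ℝ) (r2 : ℕ → ℝ)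
    (n j : ℕ) : ℝ :=
  if j = J then -(p2 n J) / (xh J - xc xh J)
  else if I < j then (p2 n (j + 1) - p2 n j) / (xc xh (j + 1) - xc xh j)
  else (p2 n (I + 1) - r2 n) / (xc xh (I + 1) - xc xh I)

/-- The interior scheme equations of the one-dimensional composite finite volume scheme:
`(h_j/δt₁)(p_j^{n,k} − p_j^{n,k−1}) − (u_{j+1/2}^{n,k} − u_{j−1/2}^{n,k}) = h_j f_j^{n,k}`
for `j = 1,…,I`, `n = 1,…,N₂`, `k = 1,…,𝒦`, and
`(h_j/δt₂)(p_j^{n} − p_j^{n−1}) − (u_{j+1/2}^{n} − u_{j−1/2}^{n}) = h_j f_j^{n}`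
for `j = I+1,…,J`, `n = 1,…,N₂`. -/
def SchemeEqs (J I K N2 : ℕ) (δt1 δt2 : ℝ) (xh : ℕ → ℝ)
    (p0 : ℕ → ℝ) (f1 : ℕ → ℕ → ℕ → ℝ) (f2 : ℕ → ℕ → ℝ)
    (p1 : ℕ → ℕ → ℕ → ℝ) (p2 : ℕ → ℕ → ℝ) (r1 : ℕ → ℕ → ℝ) (r2 : ℕ → ℝ) : Prop :=
  (∀ n ∈ Icc 1 N2, ∀ k ∈ Icc 1 K, ∀ j ∈ Icc 1 I,
      (hw xh j / δt1) * (p1 n k j - prevF K p0 p1 n k j)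
        - (uF I xh p1 r1 n k j - uF I xh p1 r1 n k (j - 1)) = hw xh j * f1 n k j)
  ∧ (∀ n ∈ Icc 1 N2, ∀ j ∈ Icc (I + 1) J,
      (hw xh j / δt2) * (p2 n j - prevC p0 p2 n j)
        - (uC I J xh p2 r2 n j - uC I J xh p2 r2 n (j - 1)) = hw xh j * f2 n j)

/-- Interface conditions of the overlapping scheme with coarse-flux/fine-pressure
matching: `δt₂ u_{I+1/2}^{n} = ∑_{k=1}^{𝒦} δt₁ u_{I+1/2}^{n,k}` and
`p_{I+1}^{n,k} = p_{I+1}^{n}` for all `k`. -/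
def InterfaceCoarseFluxOverlap (J I K N2 : ℕ) (δt1 δt2 : ℝ) (xh : ℕ → ℝ)
    (p1 : ℕ → ℕ → ℕ → ℝ) (p2 : ℕ → ℕ → ℝ) (r1 : ℕ → ℕ → ℝ) (r2 : ℕ → ℝ) : Prop :=
  ∀ n ∈ Icc 1 N2,
    δt2 * uC I J xh p2 r2 n I = ∑ k ∈ Icc 1 K, δt1 * uF I xh p1 r1 n k I
    ∧ ∀ k ∈ Icc 1 K, r1 n k = p2 n (I + 1)


/-!
Energy method. Testing the implicit cell equation of a time step with the new pressure and
summing by parts over a block of cells bounds the new discrete `L²` energy by the old one plus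
`2δ` times the boundary flux work, because each face flux is a nonnegative multiple of the
pressure jump across it. On the fine block the only boundary work left is
`δt₁ u_{I+1/2}^{n,k} p_{I+1}^{n,k}`; pressure matching turns it into
`δt₁ u_{I+1/2}^{n,k} p_{I+1}^{n}`, and summed over `k` the flux matching makes it exactly
`δt₂ u_{I+1/2}^{n} p_{I+1}^{n}`, which is the work removed from the coarse block. Hence the total
energy does not increase over a coarse step, whatever the step sizes.
-/

noncomputable def energy (xh : ℕ → ℝ) (s : Finset ℕ) (q : ℕ → ℝ) : ℝ :=
  ∑ j ∈ s, hw xh j * q j ^ 2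

theorem energy_Icc_split (xh q : ℕ → ℝ) {I J : ℕ} (hIJ : I ≤ J) :
    energy xh (Icc 1 I) q + energy xh (Icc (I + 1) J) q = energy xh (Icc 1 J) q := by
  have hIoc : ∀ n, Icc 1 n = Ioc 0 n := Icc_add_one_left_eq_Ioc 0
  rw [energy, energy, energy, hIoc, hIoc, Icc_add_one_left_eq_Ioc]
  exact sum_Ioc_consecutive _ (Nat.zero_le I) hIJ

theorem sum_Icc_by_parts (g a : ℕ → ℝ) {m M : ℕ} (hmM : m ≤ M) :
    ∑ j ∈ Icc (m + 1) M, (g j - g (j - 1)) * a j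
      = g M * a (M + 1) - g m * a m - ∑ j ∈ Icc m M, g j * (a (j + 1) - a j) := by
  induction M, hmM using Nat.le_induction with
  | base =>
    rw [Icc_eq_empty (by omega), sum_empty, Icc_self, sum_singleton]
    ring
  | succ M hmM ih =>
    rw [sum_Icc_succ_top (by omega), ih, sum_Icc_succ_top (by omega), Nat.add_sub_cancel]
    ring

theorem sum_sq_le_of_implicit_step {m M : ℕ} (hmM : m ≤ M) {δ : ℝ} (hδ : 0 < δ)
    {h a b g : ℕ → ℝ} (hh : ∀ j ∈ Icc (m + 1) M, 0 ≤ h j)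
    (heq : ∀ j ∈ Icc (m + 1) M, h j / δ * (a j - b j) - (g j - g (j - 1)) = 0)
    (hg : ∀ j ∈ Icc m M, 0 ≤ g j * (a (j + 1) - a j)) :
    ∑ j ∈ Icc (m + 1) M, h j * a j ^ 2
      ≤ ∑ j ∈ Icc (m + 1) M, h j * b j ^ 2 + 2 * δ * (g M * a (M + 1) - g m * a m) := by
  have hcell : ∀ j ∈ Icc (m + 1) M,
      h j * a j ^ 2 ≤ h j * b j ^ 2 + 2 * δ * ((g j - g (j - 1)) * a j) := by
    intro j hj
    have hflux : g j - g (j - 1) = h j / δ * (a j - b j) := by linarith [heq j hj]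
    have hpolar : 2 * δ * (h j / δ * (a j - b j) * a j)
        = h j * a j ^ 2 - h j * b j ^ 2 + h j * (a j - b j) ^ 2 := by
      field_simp
      ring
    rw [hflux, hpolar]
    linarith [mul_nonneg (hh j hj) (sq_nonneg (a j - b j))]
  calc ∑ j ∈ Icc (m + 1) M, h j * a j ^ 2
      ≤ ∑ j ∈ Icc (m + 1) M, (h j * b j ^ 2 + 2 * δ * ((g j - g (j - 1)) * a j)) :=
        sum_le_sum hcell
    _ = ∑ j ∈ Icc (m + 1) M, h j * b j ^ 2
          + 2 * δ * (g M * a (M + 1) - g m * a m - ∑ j ∈ Icc m M, g j * (a (j + 1) - a j)) := by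
        rw [sum_add_distrib, ← mul_sum, sum_Icc_by_parts g a hmM]
    _ ≤ _ := by
        gcongr _ + 2 * δ * ?_
        exact sub_le_self _ (sum_nonneg hg)

theorem le_add_sum_of_le_add {E c : ℕ → ℝ} {N : ℕ}
    (h : ∀ k ∈ Icc 1 N, E k ≤ E (k - 1) + c k) : E N ≤ E 0 + ∑ k ∈ Icc 1 N, c k := by
  induction N with
  | zero => simp
  | succ N ih =>
    have hlast := h (N + 1) (by simp)
    have hprev := ih fun k hk => h k (Icc_subset_Icc_right (Nat.le_succ N) hk)
    rw [sum_Icc_succ_top (by omega)]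
    rw [Nat.add_sub_cancel] at hlast
    linarith

theorem mul_sub_nonneg_of_eq_div {u d x y : ℝ} (hd : 0 < d) (hu : u = (y - x) / d) :
    0 ≤ u * (y - x) := by
  rw [hu, div_mul_eq_mul_div]
  exact div_nonneg (mul_self_nonneg _) hd.le

section Mesh

variable {xh : ℕ → ℝ} {J j : ℕ}

theorem xh_pred_lt_xh (hx : StrictMonoOn xh (Set.Iic J)) (h1 : 1 ≤ j) (hj : j ≤ J) :
    xh (j - 1) < xh j :=
  hx (Set.mem_Iic.2 (by omega)) (Set.mem_Iic.2 hj) (by omega)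

theorem xh_pred_lt_xc (hx : StrictMonoOn xh (Set.Iic J)) (h1 : 1 ≤ j) (hj : j ≤ J) :
    xh (j - 1) < xc xh j := by
  have := xh_pred_lt_xh hx h1 hj
  unfold xc
  linarith

theorem xc_lt_xh (hx : StrictMonoOn xh (Set.Iic J)) (h1 : 1 ≤ j) (hj : j ≤ J) :
    xc xh j < xh j := by
  have := xh_pred_lt_xh hx h1 hj
  unfold xc
  linarith

theorem xc_lt_xc_succ (hx : StrictMonoOn xh (Set.Iic J)) (h1 : 1 ≤ j) (hj : j < J) :
    xc xh j < xc xh (j + 1) :=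
  (xc_lt_xh hx h1 hj.le).trans (by simpa using xh_pred_lt_xc hx (j := j + 1) (by omega) hj)

theorem hw_pos (hx : StrictMonoOn xh (Set.Iic J)) (h1 : 1 ≤ j) (hj : j ≤ J) : 0 < hw xh j :=
  sub_pos.2 (xh_pred_lt_xh hx h1 hj)

end Mesh

section Scheme

variable {I J K : ℕ} {δt1 δt2 : ℝ} {xh p0 : ℕ → ℝ} {p1 : ℕ → ℕ → ℕ → ℝ} {p2 : ℕ → ℕ → ℝ}
  {r1 : ℕ → ℕ → ℝ} {r2 : ℕ → ℝ} {n k j : ℕ}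

theorem prevF_succ (hk : k ≠ 0) : prevF K p0 p1 n (k + 1) = p1 n k := by
  ext j
  simp [prevF, hk]

theorem prevF_succ_one (hn : n ≠ 0) : prevF K p0 p1 (n + 1) 1 = p1 n K := by
  ext j
  simp [prevF, hn]

theorem prevF_one_one : prevF K p0 p1 1 1 = p0 := rfl

theorem prevC_succ (hn : n ≠ 0) : prevC p0 p2 (n + 1) = p2 n := by
  ext j
  simp [prevC, hn]

theorem prevC_one : prevC p0 p2 1 = p0 := rfl

def fineProfile (I : ℕ) (q : ℕ → ℝ) (r : ℝ) (j : ℕ) : ℝ :=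
  if j = 0 then 0 else if j ≤ I then q j else r

/-- The ghost value at the interface cell `I` is `q (I + 1)`, not `p_I^n`: the interface face
then does no work inside the coarse block, and the coarse boundary work is
`u_{I+1/2}^n p_{I+1}^n`, the quantity the flux matching controls. -/
def coarseProfile (I J : ℕ) (q : ℕ → ℝ) (j : ℕ) : ℝ :=
  if j ≤ I then q (I + 1) else if j ≤ J then q j else 0

theorem uF_mul_fineProfile_nonneg (hx : StrictMonoOn xh (Set.Iic J)) (hI : 1 ≤ I)
    (hIJ : I < J) (hj : j ≤ I) :
    0 ≤ uF I xh p1 r1 n k j * (fineProfile I (p1 n k) (r1 n k) (j + 1)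
      - fineProfile I (p1 n k) (r1 n k) j) := by
  rcases Nat.eq_zero_or_pos j with rfl | hj0
  · refine mul_sub_nonneg_of_eq_div (sub_pos.2 (xh_pred_lt_xc hx le_rfl (by omega))) ?_
    simp [uF, fineProfile, hI]
  rcases hj.lt_or_eq with hjI | rfl
  · refine mul_sub_nonneg_of_eq_div (sub_pos.2 (xc_lt_xc_succ hx hj0 (by omega))) ?_
    simp [uF, fineProfile, hjI, hjI.le, hj0.ne', Nat.succ_le_of_lt hjI]
  · refine mul_sub_nonneg_of_eq_div (sub_pos.2 (xc_lt_xc_succ hx hj0 hIJ)) ?_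
    simp [uF, fineProfile, hj0.ne']

theorem uC_mul_coarseProfile_nonneg (hx : StrictMonoOn xh (Set.Iic J)) (hIJ : I < J)
    (hIj : I ≤ j) (hj : j ≤ J) :
    0 ≤ uC I J xh p2 r2 n j * (coarseProfile I J (p2 n) (j + 1) - coarseProfile I J (p2 n) j) := by
  rcases hIj.lt_or_eq with hIj | rfl
  · rcases hj.lt_or_eq with hjJ | rfl
    · refine mul_sub_nonneg_of_eq_div (sub_pos.2 (xc_lt_xc_succ hx (by omega) hjJ)) ?_
      simp [uC, coarseProfile, hjJ.ne, hIj, hIj.not_ge, iff_false_intro (lt_asymm hIj), hjJ.le,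
        Nat.succ_le_of_lt hjJ]
    · refine mul_sub_nonneg_of_eq_div (sub_pos.2 (xc_lt_xh hx (by omega) le_rfl)) ?_
      simp [uC, coarseProfile, hIj.not_ge, iff_false_intro (lt_asymm hIj), neg_div]
  · simp [coarseProfile, Nat.succ_le_of_lt hIJ]

theorem fine_energy_step (hx : StrictMonoOn xh (Set.Iic J)) (hI : 1 ≤ I) (hIJ : I < J)
    (hδ : 0 < δt1)
    (heq : ∀ j ∈ Icc 1 I, hw xh j / δt1 * (p1 n k j - prevF K p0 p1 n k j)
      - (uF I xh p1 r1 n k j - uF I xh p1 r1 n k (j - 1)) = 0) :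
    energy xh (Icc 1 I) (p1 n k)
      ≤ energy xh (Icc 1 I) (prevF K p0 p1 n k) + 2 * δt1 * (uF I xh p1 r1 n k I * r1 n k) := by
  have hprofile : ∀ j ∈ Icc 1 I, fineProfile I (p1 n k) (r1 n k) j = p1 n k j := by
    intro j hj
    rw [mem_Icc] at hj
    simp [fineProfile, hj.2, Nat.one_le_iff_ne_zero.1 hj.1]
  have hstep := sum_sq_le_of_implicit_step (Nat.zero_le I) hδ (h := hw xh)
    (a := fineProfile I (p1 n k) (r1 n k)) (b := prevF K p0 p1 n k) (g := uF I xh p1 r1 n k)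
    (fun j hj => (hw_pos hx (mem_Icc.1 hj).1 ((mem_Icc.1 hj).2.trans hIJ.le)).le)
    (fun j hj => by rw [hprofile j hj]; exact heq j hj)
    (fun j hj => uF_mul_fineProfile_nonneg hx hI hIJ (mem_Icc.1 hj).2)
  rw [zero_add, sum_congr rfl fun j hj => by rw [hprofile j hj]] at hstep
  simpa [fineProfile, energy] using hstep

theorem coarse_energy_step (hx : StrictMonoOn xh (Set.Iic J)) (hIJ : I < J) (hδ : 0 < δt2)
    (heq : ∀ j ∈ Icc (I + 1) J, hw xh j / δt2 * (p2 n j - prevC p0 p2 n j)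
      - (uC I J xh p2 r2 n j - uC I J xh p2 r2 n (j - 1)) = 0) :
    energy xh (Icc (I + 1) J) (p2 n)
      ≤ energy xh (Icc (I + 1) J) (prevC p0 p2 n)
        - 2 * δt2 * (uC I J xh p2 r2 n I * p2 n (I + 1)) := by
  have hprofile : ∀ j ∈ Icc (I + 1) J, coarseProfile I J (p2 n) j = p2 n j := by
    intro j hj
    rw [mem_Icc] at hj
    simp [coarseProfile, hj.2, Nat.not_le.2 hj.1]
  have hstep := sum_sq_le_of_implicit_step hIJ.le hδ (h := hw xh)
    (a := coarseProfile I J (p2 n)) (b := prevC p0 p2 n) (g := uC I J xh p2 r2 n)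
    (fun j hj => (hw_pos hx (Nat.le_add_left 1 I |>.trans (mem_Icc.1 hj).1) (mem_Icc.1 hj).2).le)
    (fun j hj => by rw [hprofile j hj]; exact heq j hj)
    (fun j hj => uC_mul_coarseProfile_nonneg hx hIJ (mem_Icc.1 hj).1 (mem_Icc.1 hj).2)
  rw [sum_congr rfl fun j hj => by rw [hprofile j hj]] at hstep
  simpa [coarseProfile, energy, sub_eq_add_neg, hIJ.not_gt] using hstep

theorem energy_le_of_coarse_step (hx : StrictMonoOn xh (Set.Iic J)) (hI : 1 ≤ I) (hIJ : I < J)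
    (hK : 1 ≤ K) (hδ1 : 0 < δt1) (hδ2 : 0 < δt2)
    (hfine : ∀ k ∈ Icc 1 K, ∀ j ∈ Icc 1 I, hw xh j / δt1 * (p1 n k j - prevF K p0 p1 n k j)
      - (uF I xh p1 r1 n k j - uF I xh p1 r1 n k (j - 1)) = 0)
    (hcoarse : ∀ j ∈ Icc (I + 1) J, hw xh j / δt2 * (p2 n j - prevC p0 p2 n j)
      - (uC I J xh p2 r2 n j - uC I J xh p2 r2 n (j - 1)) = 0)
    (hflux : δt2 * uC I J xh p2 r2 n I = ∑ k ∈ Icc 1 K, δt1 * uF I xh p1 r1 n k I)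
    (hmatch : ∀ k ∈ Icc 1 K, r1 n k = p2 n (I + 1)) :
    energy xh (Icc 1 I) (p1 n K) + energy xh (Icc (I + 1) J) (p2 n)
      ≤ energy xh (Icc 1 I) (prevF K p0 p1 n 1) + energy xh (Icc (I + 1) J) (prevC p0 p2 n) := by
  have hfineK := le_add_sum_of_le_add (N := K)
    (E := fun k => energy xh (Icc 1 I) (prevF K p0 p1 n (k + 1)))
    (c := fun k => 2 * δt1 * (uF I xh p1 r1 n k I * p2 n (I + 1))) fun k hk => by
      have hk1 := (mem_Icc.1 hk).1
      rw [prevF_succ (by omega), Nat.sub_add_cancel hk1, ← hmatch k hk]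
      exact fine_energy_step hx hI hIJ hδ1 (hfine k hk)
  have hwork : ∑ k ∈ Icc 1 K, 2 * δt1 * (uF I xh p1 r1 n k I * p2 n (I + 1))
      = 2 * δt2 * (uC I J xh p2 r2 n I * p2 n (I + 1)) := by
    rw [mul_assoc, ← mul_assoc δt2, hflux, sum_mul, mul_sum]
    exact sum_congr rfl fun k _ => by ring
  have hcoarseStep := coarse_energy_step hx hIJ hδ2 hcoarse
  simp only [prevF_succ (by omega : K ≠ 0), zero_add, hwork] at hfineK
  linarith

end Scheme

theorem stability_overlap_coarse_flux_general
    (J I K N2 : ℕ) (hI1 : 1 ≤ I) (hIJ : I < J) (hK : 1 ≤ K) (hN2 : 1 ≤ N2)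
    (δt1 : ℝ) (hδt1 : 0 < δt1) (δt2 : ℝ) (hδt2 : δt2 = (K : ℝ) * δt1)
    (xh : ℕ → ℝ) (hxmono : ∀ j < J, xh j < xh (j + 1))
    (p0 : ℕ → ℝ)
    (p1 : ℕ → ℕ → ℕ → ℝ) (p2 : ℕ → ℕ → ℝ) (r1 : ℕ → ℕ → ℝ) (r2 : ℕ → ℝ)
    (hscheme : SchemeEqs J I K N2 δt1 δt2 xh p0 (fun _ _ _ => 0) (fun _ _ => 0) p1 p2 r1 r2)
    (hinterface : InterfaceCoarseFluxOverlap J I K N2 δt1 δt2 xh p1 p2 r1 r2) :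
    ∑ j ∈ Icc 1 I, hw xh j * (p1 N2 K j) ^ 2
      + ∑ j ∈ Icc (I + 1) J, hw xh j * (p2 N2 j) ^ 2
      ≤ ∑ j ∈ Icc 1 J, hw xh j * (p0 j) ^ 2 := by
  obtain ⟨hfine, hcoarse⟩ := hscheme
  have hx : StrictMonoOn xh (Set.Iic J) :=
    strictMonoOn_Iic_of_lt_succ fun j hj => by simpa using hxmono j hj
  have hδt2_pos : 0 < δt2 := hδt2 ▸ mul_pos (Nat.cast_pos.2 hK) hδt1
  have hdecay := le_add_sum_of_le_add (N := N2) (c := fun _ => 0)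
    (E := fun n => energy xh (Icc 1 I) (prevF K p0 p1 (n + 1) 1)
      + energy xh (Icc (I + 1) J) (prevC p0 p2 (n + 1))) fun n hn => by
      have hn1 := (mem_Icc.1 hn).1
      rw [prevF_succ_one (by omega), prevC_succ (by omega), Nat.sub_add_cancel hn1, add_zero]
      exact energy_le_of_coarse_step hx hI1 hIJ hK hδt1 hδt2_pos
        (fun k hk j hj => by simpa only [mul_zero] using hfine n hn k hk j hj)
        (fun j hj => by simpa only [mul_zero] using hcoarse n hn j hj)
        (hinterface n hn).1 (hinterface n hn).2
  rw [prevF_succ_one (by omega), prevC_succ (by omega), zero_add, prevF_one_one, prevC_one,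
    sum_const_zero, add_zero, energy_Icc_split xh p0 hIJ.le] at hdecay
  exact hdecay

/-- Unconditional `L²` stability of the overlapping scheme with
coarse-flux/fine-pressure matching: if all sources vanish, every solution satisfies
`∑_{j ≤ I} h_j (p_j^{N₂,𝒦})² + ∑_{j > I} h_j (p_j^{N₂})² ≤ ∑_{j=1}^{J} h_j (p_j^0)²`,
with no restriction on the sizes of `δt₁`, `δt₂` or the cell widths. -/
theorem stability_overlap_coarse_flux
    (J I K N2 : ℕ) (hJ : 3 ≤ J) (hI1 : 1 ≤ I) (hIJ : I < J) (hK : 1 ≤ K) (hN2 : 1 ≤ N2)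
    (δt1 : ℝ) (hδt1 : 0 < δt1) (δt2 : ℝ) (hδt2 : δt2 = (K : ℝ) * δt1)
    (xh : ℕ → ℝ) (hx0 : xh 0 = 0) (hxmono : ∀ j < J, xh j < xh (j + 1))
    (p0 : ℕ → ℝ)
    (p1 : ℕ → ℕ → ℕ → ℝ) (p2 : ℕ → ℕ → ℝ) (r1 : ℕ → ℕ → ℝ) (r2 : ℕ → ℝ)
    (hscheme : SchemeEqs J I K N2 δt1 δt2 xh p0 (fun _ _ _ => 0) (fun _ _ => 0) p1 p2 r1 r2)
    (hinterface : InterfaceCoarseFluxOverlap J I K N2 δt1 δt2 xh p1 p2 r1 r2) :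
    ∑ j ∈ Icc 1 I, hw xh j * (p1 N2 K j) ^ 2
      + ∑ j ∈ Icc (I + 1) J, hw xh j * (p2 N2 j) ^ 2
      ≤ ∑ j ∈ Icc 1 J, hw xh j * (p0 j) ^ 2 :=
  stability_overlap_coarse_flux_general J I K N2 hI1 hIJ hK hN2 δt1 hδt1 δt2 hδt2 xh hxmono p0 p1 p2
    r1 r2 hscheme hinterface
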